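/- Fix α ∈ (0,1]. Suppose the positive graph (V, E_pst) is connected, E_neg is nonempty, μ({i,j}) > 0 for every {i,j} ∈ E, and either p_ii ≥ 1/2 for all i or P is doubly stochastic with n ≥ 4. For β ≥ 0 write M_β := I − αL⁺ + βL⁻. Then there exists a threshold β_⋆ > 0 (depending on α) such that: (i) for all 0 ≤ β < β_⋆, λ_max(M_β − U) < 1, and consequently for every x⁰ ∈ ℝⁿ and all i, j ∈ V, (M_βᵏx⁰)_i − (M_βᵏx⁰)_j → 0 as k → ∞; (ii) for all β > β_⋆, λ_max(M_β − U) > 1, and the set of x⁰ ∈ ℝⁿ for which limsup_{k→∞} max_{i,j∈V} |(M_βᵏx⁰)_i − (M_βᵏx⁰)_j| < ∞ has Lebesgue measure zero. -/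

import Mathlib

/-!
Write `N_β = M_β - U`. It is symmetric, kills `𝟙`, and its quadratic form
`x ⬝ x - α xᵀL⁺x + β xᵀL⁻x - (∑ xᵢ)² / n` is affine in `β`; hence `f β = λ_max(N_β)`, the maximum
of this form on the unit sphere, is convex in `β`. Connectivity of the positive graph gives
`f 0 < 1`, testing a negative edge `{i, j}` on `eᵢ - eⱼ` gives `f β > 1` for large `β`, and a convex
function with `f 0 < 1` crosses the level `1` exactly once, at some `β⋆ > 0`.

The degree condition on `P` gives `L⁺ ≤ I - U`, so `N_β ≥ 0` when `α ≤ 1` and `β ≥ 0`. Below `β⋆`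
the operator norm of `N_β` is then `f β < 1`, and `M_βᵏ = N_βᵏ + U` drives all disagreements to
`0`. Above `β⋆`, a top eigenvector `w` of `N_β` is orthogonal to `𝟙`, hence an eigenvector of
`M_β` with eigenvalue `f β > 1`, so `w ⬝ M_βᵏ x⁰ = (f β)ᵏ (w ⬝ x⁰)` and the disagreements of
`M_βᵏ x⁰` are unbounded unless `x⁰` lies in the hyperplane `w ⬝ x⁰ = 0`.
-/

open Matrix MeasureTheory Filter
open scoped ENNReal

noncomputable section

namespace SignedOpinion

/-- The vector `e i - e j` in `ℝⁿ`. -/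
def esub {n : ℕ} (i j : Fin n) : Fin n → ℝ :=
  fun k => (if k = i then (1 : ℝ) else 0) - (if k = j then (1 : ℝ) else 0)

/-- The rank-one matrix `(e i - e j) (e i - e j)ᵀ`. -/
def dmatAux {n : ℕ} (i j : Fin n) : Matrix (Fin n) (Fin n) ℝ :=
  Matrix.vecMulVec (esub i j) (esub i j)

lemma dmatAux_symm {n : ℕ} (i j : Fin n) : dmatAux i j = dmatAux j i := by
  ext a b
  simp only [dmatAux, esub, Matrix.vecMulVec_apply]
  ring

/-- `(e i - e j)(e i - e j)ᵀ` as a function of the unordered pair `{i, j}`. -/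
def dmat {n : ℕ} : Sym2 (Fin n) → Matrix (Fin n) (Fin n) ℝ :=
  Sym2.lift ⟨dmatAux, dmatAux_symm⟩

/-- The averaging matrix `U = 𝟙𝟙ᵀ / n`. -/
def Umat (n : ℕ) : Matrix (Fin n) (Fin n) ℝ :=
  (n : ℝ)⁻¹ • Matrix.of (fun _ _ => (1 : ℝ))

/-- The positive update matrix `W⁺_{ij} = I - α (e i - e j)(e i - e j)ᵀ`. -/
def Wpos {n : ℕ} (α : ℝ) (e : Sym2 (Fin n)) : Matrix (Fin n) (Fin n) ℝ :=
  1 - α • dmat e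

/-- The negative update matrix `W⁻_{ij} = I + β (e i - e j)(e i - e j)ᵀ`. -/
def Wneg {n : ℕ} (β : ℝ) (e : Sym2 (Fin n)) : Matrix (Fin n) (Fin n) ℝ :=
  1 + β • dmat e

/-- The edge selection probability `μ({i,j}) = (p i j + p j i) / n`. -/
def edgeWeight {n : ℕ} (P : Matrix (Fin n) (Fin n) ℝ) : Sym2 (Fin n) → ℝ :=
  Sym2.lift ⟨fun i j => (P i j + P j i) / n, fun i j => by show (P i j + P j i) / n = (P j i + P i j) / n; rw [add_comm (P i j)]⟩

/-- The weighted Laplacian of the graph on `Fin n` with edge set `Es`,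
with weight `edgeWeight P e` on the edge `e`. -/
def lap {n : ℕ} (P : Matrix (Fin n) (Fin n) ℝ) (Es : Finset (Sym2 (Fin n))) :
    Matrix (Fin n) (Fin n) ℝ :=
  ∑ e ∈ Es, edgeWeight P e • dmat e

/-- The unit-weight (standard) Laplacian of the graph with edge set `Es`. -/
def lapStd {n : ℕ} (Es : Finset (Sym2 (Fin n))) : Matrix (Fin n) (Fin n) ℝ :=
  ∑ e ∈ Es, dmat e

/-- Largest (real) eigenvalue of a matrix. For a real symmetric matrix this is
`λ_max`. -/
def lamMax {n : ℕ} (M : Matrix (Fin n) (Fin n) ℝ) : ℝ :=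
  sSup {t : ℝ | ∃ v : Fin n → ℝ, v ≠ 0 ∧ M *ᵥ v = t • v}

/-- Smallest (real) eigenvalue of a matrix. -/
def lamMin {n : ℕ} (M : Matrix (Fin n) (Fin n) ℝ) : ℝ :=
  sInf {t : ℝ | ∃ v : Fin n → ℝ, v ≠ 0 ∧ M *ᵥ v = t • v}

/-- Second smallest eigenvalue of a (connected-graph) Laplacian: the smallest
eigenvalue attained by an eigenvector orthogonal to the all-ones vector. -/
def lam2 {n : ℕ} (M : Matrix (Fin n) (Fin n) ℝ) : ℝ :=
  sInf {t : ℝ | ∃ v : Fin n → ℝ, v ≠ 0 ∧ (∑ i, v i = 0) ∧ M *ᵥ v = t • v}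

/-- `P` is row-stochastic. -/
def RowStochastic {n : ℕ} (P : Matrix (Fin n) (Fin n) ℝ) : Prop :=
  (∀ i j, 0 ≤ P i j) ∧ ∀ i, ∑ j, P i j = 1

/-- `P` complies with the graph with edge set `E`. -/
def Complies {n : ℕ} (P : Matrix (Fin n) (Fin n) ℝ) (E : Finset (Sym2 (Fin n))) : Prop :=
  ∀ i j : Fin n, i ≠ j → 0 < P i j → s(i, j) ∈ E

/-- The simple graph on `Fin n` with edge set `E`. -/
def graphOf {n : ℕ} (E : Finset (Sym2 (Fin n))) : SimpleGraph (Fin n) :=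
  SimpleGraph.fromEdgeSet (↑E)

/-- `diam x = max_i x i - min_i x i`  (the quantity `𝔛` of the paper). -/
def diam {n : ℕ} (x : Fin n → ℝ) : ℝ := (⨆ i, x i) - ⨅ i, x i

/-- Selection alphabet `E ∪ {∗}` : an unordered node pair, or no selection. -/
abbrev Sel (n : ℕ) := Option (Sym2 (Fin n))

instance (n : ℕ) : MeasurableSpace (Sel n) := ⊤

/-- The update matrix triggered by a selection. -/
def Wsel {n : ℕ} (α β : ℝ) (Epst Eneg : Finset (Sym2 (Fin n))) :
    Sel n → Matrix (Fin n) (Fin n) ℝ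
  | none => 1
  | some e => if e ∈ Epst then Wpos α e else if e ∈ Eneg then Wneg β e else 1

/-- The belief process `x(k)` driven by the selection sequence `ω`. -/
def xproc {n : ℕ} (α β : ℝ) (Epst Eneg : Finset (Sym2 (Fin n))) (x0 : Fin n → ℝ)
    (ω : ℕ → Sel n) : ℕ → Fin n → ℝ
  | 0 => x0
  | k + 1 => Wsel α β Epst Eneg (ω k) *ᵥ xproc α β Epst Eneg x0 ω k

/-- The matrix product `W(k) W(k-1) ⋯ W(0)`. -/
def Wprod {n : ℕ} (α β : ℝ) (Epst Eneg : Finset (Sym2 (Fin n))) (ω : ℕ → Sel n) :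
    ℕ → Matrix (Fin n) (Fin n) ℝ
  | 0 => Wsel α β Epst Eneg (ω 0)
  | k + 1 => Wsel α β Epst Eneg (ω (k + 1)) * Wprod α β Epst Eneg ω k

/-- The one-step selection distribution `μ` on `E ∪ {∗}`. -/
def seldist {n : ℕ} (P : Matrix (Fin n) (Fin n) ℝ) (E : Finset (Sym2 (Fin n))) :
    Sel n → ℝ≥0∞
  | none => ENNReal.ofReal (1 - ∑ e ∈ E, edgeWeight P e)
  | some e => if e ∈ E then ENNReal.ofReal (edgeWeight P e) else 0

/-- `ℙ` is the infinite product of `seldist P E`: the coordinates are i.i.d.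
with per-coordinate distribution `seldist P E` (characterized on cylinders). -/
def IsIIDSel {n : ℕ} (ℙ : Measure (ℕ → Sel n)) (P : Matrix (Fin n) (Fin n) ℝ)
    (E : Finset (Sym2 (Fin n))) : Prop :=
  ∀ (K : Finset ℕ) (v : ℕ → Sel n),
    ℙ {ω | ∀ k ∈ K, ω k = v k} = ∏ k ∈ K, seldist P E (v k)

/-- Selection alphabet for the asymmetric constrained model:
an ordered node pair (or `∗`), together with a tag in `{1,2,3}`. -/
abbrev Sel2 (n : ℕ) := Option (Fin n × Fin n) × Fin 3

instance (n : ℕ) : MeasurableSpace (Sel2 n) := ⊤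

/-- weights `a, b, c` on the tags. -/
def wabc (a b c : ℝ) : Fin 3 → ℝ := ![a, b, c]

/-- Per-step distribution for the asymmetric constrained model: the pair
`({i,j}, t)` (represented by its ordered representative with `i < j`) has mass
`(wabc a b c t) · μ({i,j})`, and `(∗, t)` has mass `(wabc a b c t) · μ(∗)`. -/
def seldist2 {n : ℕ} (P : Matrix (Fin n) (Fin n) ℝ) (E : Finset (Sym2 (Fin n)))
    (a b c : ℝ) : Sel2 n → ℝ≥0∞
  | (none, t) => ENNReal.ofReal (wabc a b c t) * ENNReal.ofReal (1 - ∑ e ∈ E, edgeWeight P e)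
  | (some (i, j), t) =>
      if i < j ∧ s(i, j) ∈ E then
        ENNReal.ofReal (wabc a b c t) * ENNReal.ofReal (edgeWeight P s(i, j))
      else 0

/-- `ℙ` is the infinite product of `seldist2 P E a b c`. -/
def IsIIDSel2 {n : ℕ} (ℙ : Measure (ℕ → Sel2 n)) (P : Matrix (Fin n) (Fin n) ℝ)
    (E : Finset (Sym2 (Fin n))) (a b c : ℝ) : Prop :=
  ∀ (K : Finset ℕ) (v : ℕ → Sel2 n),
    ℙ {ω | ∀ k ∈ K, ω k = v k} = ∏ k ∈ K, seldist2 P E a b c (v k)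

/-- Projection onto `[-A, A]`. -/
def projA (A z : ℝ) : ℝ := max (-A) (min A z)

/-- `θ(e) = α` on positive edges, `-β` on negative edges. -/
def theta {n : ℕ} (α β : ℝ) (Epst Eneg : Finset (Sym2 (Fin n))) (e : Sym2 (Fin n)) : ℝ :=
  if e ∈ Epst then α else if e ∈ Eneg then -β else 0

/-- One step of the asymmetric constrained update. -/
def cstep {n : ℕ} (α β A : ℝ) (Epst Eneg : Finset (Sym2 (Fin n))) :
    Sel2 n → (Fin n → ℝ) → (Fin n → ℝ)
  | (none, _), x => x
  | (some (i, j), t), x =>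
      if t = 0 then
        Function.update x i
          (projA A ((1 - theta α β Epst Eneg s(i, j)) * x i + theta α β Epst Eneg s(i, j) * x j))
      else if t = 1 then
        Function.update x j
          (projA A ((1 - theta α β Epst Eneg s(i, j)) * x j + theta α β Epst Eneg s(i, j) * x i))
      else
        Function.update
          (Function.update x i
            (projA A ((1 - theta α β Epst Eneg s(i, j)) * x i + theta α β Epst Eneg s(i, j) * x j)))
          j
          (projA A ((1 - theta α β Epst Eneg s(i, j)) * x j + theta α β Epst Eneg s(i, j) * x i))

/-- The constrained asymmetric belief process. -/
def cproc {n : ℕ} (α β A : ℝ) (Epst Eneg : Finset (Sym2 (Fin n))) (x0 : Fin n → ℝ)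
    (ω : ℕ → Sel2 n) : ℕ → Fin n → ℝ
  | 0 => x0
  | k + 1 => cstep α β A Epst Eneg (ω k) (cproc α β A Epst Eneg x0 ω k)

open scoped RealInnerProductSpace Topology
open Finset Set

/-- The sublevel set `{β ≥ 0 | f β < c}` is an interval `[0, β⋆)` or `[0, β⋆]`, and convexity
through `(0, f 0)` with `f 0 < c` rules out both `β⋆ = 0` and `f = c` beyond `β⋆`. -/
theorem _root_.ConvexOn.exists_threshold {f : ℝ → ℝ} {c B : ℝ} (hf : ConvexOn ℝ (Ici 0) f)
    (h0 : f 0 < c) (hB0 : 0 ≤ B) (hB : c < f B) :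
    ∃ βs > 0, (∀ β, 0 ≤ β → β < βs → f β < c) ∧ ∀ β, βs < β → c < f β := by
  let S := {β | β ∈ Ici (0 : ℝ) ∧ f β < c}
  have hS : S.OrdConnected := (hf.convex_lt c).ordConnected
  have h0S : (0 : ℝ) ∈ S := ⟨Set.mem_Ici.2 le_rfl, h0⟩
  have hBpos : 0 < B := hB0.lt_of_ne (by rintro rfl; exact h0.not_gt hB)
  have hchord (β θ : ℝ) (hβ : 0 ≤ β) (hθ0 : 0 ≤ θ) (hθ1 : θ ≤ 1) :
      f (θ * β) ≤ (1 - θ) * f 0 + θ * f β := by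
    simpa using hf.2 (Set.mem_Ici.2 le_rfl) (Set.mem_Ici.2 hβ) (sub_nonneg.2 hθ1) hθ0 (by ring)
  have hbdd : BddAbove S := by
    refine ⟨B, fun β hβ => le_of_not_gt fun hBβ => hB.not_gt ?_⟩
    exact (hS.out h0S hβ ⟨hB0, hBβ.le⟩).2
  obtain ⟨θ, hθ0, hθ1, hθ⟩ : ∃ θ, 0 < θ ∧ θ ≤ 1 ∧ θ * (f B - f 0) < c - f 0 := by
    have hd : 0 < f B - f 0 := by linarith
    refine ⟨(c - f 0) / (2 * (f B - f 0)), by apply div_pos <;> linarith, ?_, ?_⟩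
    · rw [div_le_one (by positivity)]
      linarith
    · rw [div_mul_eq_mul_div, mul_div_mul_right _ _ hd.ne']
      linarith
  have hθS : θ * B ∈ S := ⟨Set.mem_Ici.2 (by positivity),
    (hchord B θ hB0 hθ0.le hθ1).trans_lt (by linarith)⟩
  refine ⟨sSup S, (mul_pos hθ0 hBpos).trans_le (le_csSup hbdd hθS), ?_, ?_⟩
  · intro β hβ0 hβ
    obtain ⟨β', hβ'S, hββ'⟩ := exists_lt_of_lt_csSup ⟨0, h0S⟩ hβ
    exact (hS.out h0S hβ'S ⟨hβ0, hββ'.le⟩).2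
  · intro β hβ
    by_contra! hfβ
    have hS0 : 0 ≤ sSup S := le_csSup hbdd h0S
    have hβpos : 0 < β := hS0.trans_lt hβ
    obtain ⟨θ, hθ0, hθ1, hθ⟩ : ∃ θ, 0 < θ ∧ θ < 1 ∧ sSup S < θ * β :=
      ⟨(sSup S / β + 1) / 2, by positivity,
        by rw [div_lt_one two_pos, ← lt_sub_iff_add_lt, div_lt_iff₀ hβpos]; linarith,
        by rw [div_mul_eq_mul_div, add_mul, div_mul_cancel₀ _ hβpos.ne']; linarith⟩
    have hθS : θ * β ∈ S := ⟨Set.mem_Ici.2 (by positivity),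
      (hchord β θ hβpos.le hθ0.le hθ1.le).trans_lt (by nlinarith)⟩
    exact hθ.not_ge (le_csSup hbdd hθS)

section DotProduct

variable {n : ℕ}

lemma dotProduct_self_nonneg (x : Fin n → ℝ) : 0 ≤ x ⬝ᵥ x :=
  Finset.sum_nonneg fun i _ => mul_self_nonneg (x i)

lemma dotProduct_self_pos {x : Fin n → ℝ} (hx : x ≠ 0) : 0 < x ⬝ᵥ x :=
  (dotProduct_self_nonneg x).lt_of_ne' (dotProduct_self_eq_zero.not.2 hx)

lemma dotProduct_mulVec_of_isSymm {A : Matrix (Fin n) (Fin n) ℝ} (hA : A.IsSymm) (x y : Fin n → ℝ) :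
    x ⬝ᵥ A *ᵥ y = A *ᵥ x ⬝ᵥ y := by
  rw [dotProduct_mulVec, ← mulVec_transpose, hA.eq]

lemma dotProduct_mulVec_add_smul_one {K : Matrix (Fin n) (Fin n) ℝ} (hK : K.IsSymm)
    (h1 : K *ᵥ 1 = 0) (x : Fin n → ℝ) (c : ℝ) :
    (x + c • 1) ⬝ᵥ K *ᵥ (x + c • 1) = x ⬝ᵥ K *ᵥ x := by
  rw [mulVec_add, mulVec_smul, h1, smul_zero, add_zero, add_dotProduct, smul_dotProduct,
    dotProduct_mulVec_of_isSymm hK 1, h1, zero_dotProduct, smul_zero, add_zero]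

lemma abs_dotProduct_le_of_sum_eq_zero {w y : Fin n → ℝ} (hw : ∑ i, w i = 0) (j : Fin n)
    {C : ℝ} (hC : ∀ i, |y i - y j| ≤ C) : |w ⬝ᵥ y| ≤ (∑ i, |w i|) * C := by
  have hshift : w ⬝ᵥ y = ∑ i, w i * (y i - y j) := by
    simp only [mul_sub, Finset.sum_sub_distrib, ← Finset.sum_mul, hw, zero_mul, sub_zero,
      dotProduct]
  rw [hshift, Finset.sum_mul]
  refine (Finset.abs_sum_le_sum_abs _ _).trans (Finset.sum_le_sum fun i _ => ?_)
  rw [abs_mul]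
  exact mul_le_mul_of_nonneg_left (hC i) (abs_nonneg _)

end DotProduct

section Spectral

variable {n : ℕ} {A B : Matrix (Fin n) (Fin n) ℝ}

lemma isSymmetric_toEuclideanCLM (hA : A.IsSymm) :
    (toEuclideanCLM (𝕜 := ℝ) A : EuclideanSpace ℝ (Fin n) →ₗ[ℝ] _).IsSymmetric := by
  rw [coe_toEuclideanCLM_eq_toEuclideanLin, isSymmetric_toEuclideanLin_iff]
  simpa using hA

lemma real_inner_toEuclideanCLM_self (A : Matrix (Fin n) (Fin n) ℝ)
    (x : EuclideanSpace ℝ (Fin n)) : ⟪toEuclideanCLM (𝕜 := ℝ) A x, x⟫ = x.ofLp ⬝ᵥ A *ᵥ x.ofLp := by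
  rw [real_inner_comm, inner_toEuclideanCLM]

lemma norm_sq_eq_dotProduct (x : EuclideanSpace ℝ (Fin n)) : ‖x‖ ^ 2 = x.ofLp ⬝ᵥ x.ofLp := by
  rw [EuclideanSpace.norm_sq_eq]
  simp [dotProduct, sq]

/-- `lamMax A` is the supremum of the Rayleigh quotient, which is an eigenvalue. -/
lemma lamMax_spec [NeZero n] (hA : A.IsSymm) :
    (∃ v ≠ 0, A *ᵥ v = lamMax A • v) ∧ ∀ x, x ⬝ᵥ A *ᵥ x ≤ lamMax A * (x ⬝ᵥ x) := by
  set ρ : {x : EuclideanSpace ℝ (Fin n) // x ≠ 0} → ℝ :=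
    fun x => ⟪toEuclideanCLM (𝕜 := ℝ) A x, x⟫ / ‖(x : EuclideanSpace ℝ (Fin n))‖ ^ 2
  have hbdd : BddAbove (Set.range ρ) := by
    refine ⟨‖toEuclideanCLM (𝕜 := ℝ) A‖, ?_⟩
    rintro _ ⟨x, rfl⟩
    exact (le_abs_self _).trans ((toEuclideanCLM (𝕜 := ℝ) A).rayleighQuotient_le_norm x)
  have hρ (v : Fin n → ℝ) (hv : v ≠ 0) :
      ρ ⟨WithLp.toLp 2 v, by simpa using hv⟩ = (v ⬝ᵥ A *ᵥ v) / (v ⬝ᵥ v) := by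
    simp only [ρ, real_inner_toEuclideanCLM_self, norm_sq_eq_dotProduct]
  obtain ⟨w, hw⟩ := (isSymmetric_toEuclideanCLM hA).hasEigenvalue_iSup_of_finiteDimensional
    |>.exists_hasEigenvector
  have hw0 : w.ofLp ≠ 0 := by simpa using hw.2
  have hwA : A *ᵥ w.ofLp = (⨆ x, ρ x) • w.ofLp := by
    simpa [ρ] using congrArg WithLp.ofLp hw.apply_eq_smul
  have hmax : lamMax A = ⨆ x, ρ x := by
    refine IsGreatest.csSup_eq ⟨⟨w.ofLp, hw0, hwA⟩, ?_⟩
    rintro t ⟨v, hv, hvA⟩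
    have := le_ciSup hbdd ⟨WithLp.toLp 2 v, by simpa using hv⟩
    rwa [hρ v hv, hvA, dotProduct_smul, smul_eq_mul, mul_div_assoc,
      div_self (dotProduct_self_pos hv).ne', mul_one] at this
  refine ⟨⟨w.ofLp, hw0, hmax ▸ hwA⟩, fun x => ?_⟩
  rcases eq_or_ne x 0 with rfl | hx
  · simp
  have := le_ciSup hbdd ⟨WithLp.toLp 2 x, by simpa using hx⟩
  rwa [hρ x hx, div_le_iff₀ (dotProduct_self_pos hx), ← hmax] at this

lemma exists_mulVec_eq_lamMax_smul [NeZero n] (hA : A.IsSymm) :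
    ∃ v ≠ 0, A *ᵥ v = lamMax A • v :=
  (lamMax_spec hA).1

lemma dotProduct_mulVec_le_lamMax [NeZero n] (hA : A.IsSymm) (x : Fin n → ℝ) :
    x ⬝ᵥ A *ᵥ x ≤ lamMax A * (x ⬝ᵥ x) :=
  (lamMax_spec hA).2 x

lemma lamMax_le_of_forall_dotProduct_mulVec_le [NeZero n] (hA : A.IsSymm) {c : ℝ}
    (h : ∀ x, x ⬝ᵥ A *ᵥ x ≤ c * (x ⬝ᵥ x)) : lamMax A ≤ c := by
  obtain ⟨v, hv, hvA⟩ := exists_mulVec_eq_lamMax_smul hA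
  have := h v
  rw [hvA, dotProduct_smul, smul_eq_mul] at this
  exact le_of_mul_le_mul_right this (dotProduct_self_pos hv)

lemma lamMax_lt_of_forall_dotProduct_mulVec_lt [NeZero n] (hA : A.IsSymm) {c : ℝ}
    (h : ∀ x ≠ 0, x ⬝ᵥ A *ᵥ x < c * (x ⬝ᵥ x)) : lamMax A < c := by
  obtain ⟨v, hv, hvA⟩ := exists_mulVec_eq_lamMax_smul hA
  have := h v hv
  rw [hvA, dotProduct_smul, smul_eq_mul] at this
  exact lt_of_mul_lt_mul_right this (dotProduct_self_nonneg v)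

lemma lt_lamMax_of_lt_dotProduct_mulVec [NeZero n] (hA : A.IsSymm) {c : ℝ} {x : Fin n → ℝ}
    (h : c * (x ⬝ᵥ x) < x ⬝ᵥ A *ᵥ x) : c < lamMax A := by
  by_contra! hle
  nlinarith [dotProduct_mulVec_le_lamMax hA x,
    mul_le_mul_of_nonneg_right hle (dotProduct_self_nonneg x)]

lemma lamMax_smul_add_smul_le [NeZero n] (hA : A.IsSymm) (hB : B.IsSymm) {a b : ℝ}
    (ha : 0 ≤ a) (hb : 0 ≤ b) : lamMax (a • A + b • B) ≤ a * lamMax A + b * lamMax B := by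
  refine lamMax_le_of_forall_dotProduct_mulVec_le ((hA.smul a).add (hB.smul b)) fun x => ?_
  rw [add_mulVec, smul_mulVec, smul_mulVec, dotProduct_add, dotProduct_smul, dotProduct_smul,
    smul_eq_mul, smul_eq_mul, add_mul, mul_assoc, mul_assoc]
  gcongr
  · exact dotProduct_mulVec_le_lamMax hA x
  · exact dotProduct_mulVec_le_lamMax hB x

lemma convexOn_lamMax_add_smul [NeZero n] (hA : A.IsSymm) (hB : B.IsSymm) :
    ConvexOn ℝ univ fun β : ℝ => lamMax (A + β • B) := by
  refine ⟨convex_univ, fun β₁ _ β₂ _ a b ha hb hab => ?_⟩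
  have hsplit : A + (a • β₁ + b • β₂) • B = a • (A + β₁ • B) + b • (A + β₂ • B) := by
    conv_lhs => rw [← one_smul ℝ A, ← hab]
    module
  simp only [smul_eq_mul] at hsplit ⊢
  rw [hsplit]
  exact lamMax_smul_add_smul_le (hA.add (hB.smul β₁)) (hA.add (hB.smul β₂)) ha hb

/-- For `0 ≤ A` the operator norm is `lamMax A`, so `lamMax A < 1` makes `A` a contraction. -/
lemma tendsto_pow_mulVec_zero [NeZero n] (hA : A.IsSymm) (hpos : ∀ x, 0 ≤ x ⬝ᵥ A *ᵥ x)
    (hlt : lamMax A < 1) (x : Fin n → ℝ) : Tendsto (fun k : ℕ => A ^ k *ᵥ x) atTop (𝓝 0) := by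
  set T := toEuclideanCLM (𝕜 := ℝ) A
  have hnorm : ‖T‖ ≤ max (lamMax A) 0 := by
    rw [T.norm_eq_iSup_rayleighQuotient (isSymmetric_toEuclideanCLM hA)]
    refine ciSup_le fun y => ?_
    simp only [ContinuousLinearMap.rayleighQuotient, ContinuousLinearMap.reApplyInnerSelf_apply,
      RCLike.re_to_real, T, real_inner_toEuclideanCLM_self, norm_sq_eq_dotProduct]
    have hy := dotProduct_self_nonneg y.ofLp
    rw [abs_of_nonneg (div_nonneg (hpos _) hy)]
    exact div_le_of_le_mul₀ hy (le_max_right _ _) ((dotProduct_mulVec_le_lamMax hA _).trans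
      (mul_le_mul_of_nonneg_right (le_max_left _ _) hy))
  have hT : Tendsto (fun k : ℕ => T ^ k) atTop (𝓝 0) :=
    tendsto_pow_atTop_nhds_zero_of_norm_lt_one (hnorm.trans_lt (max_lt hlt one_pos))
  have := ((PiLp.continuous_ofLp 2 _).comp
    (ContinuousLinearMap.apply ℝ _ (WithLp.toLp 2 x)).continuous).tendsto 0 |>.comp hT
  refine this.congr fun k => ?_
  simp [T, ← map_pow]

end Spectral

theorem add_pow_succ_of_mul_eq_zero {R : Type*} [Ring R] {a e : R} (he : IsIdempotentElem e)
    (hae : a * e = 0) (hea : e * a = 0) (k : ℕ) : (a + e) ^ (k + 1) = a ^ (k + 1) + e := by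
  induction k with
  | zero => simp
  | succ k ih =>
    have hpow : a ^ (k + 1) * e = 0 := by rw [pow_succ, mul_assoc, hae, mul_zero]
    rw [pow_succ, ih, add_mul, mul_add, mul_add, hpow, hea, he.eq, add_zero, zero_add, ← pow_succ]

section Averaging

variable {n : ℕ} {M : Matrix (Fin n) (Fin n) ℝ}

lemma Umat_mulVec (x : Fin n → ℝ) : Umat n *ᵥ x = fun _ => (∑ i, x i) / n := by
  ext
  simp [Umat, mulVec, dotProduct, Finset.mul_sum, div_eq_inv_mul]

lemma Umat_isSymm : (Umat n).IsSymm := by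
  ext
  simp [Umat]

lemma isIdempotentElem_Umat [NeZero n] : IsIdempotentElem (Umat n) := by
  ext i j
  simp [Umat, Matrix.mul_apply, NeZero.ne]

lemma Umat_mulVec_one [NeZero n] : Umat n *ᵥ 1 = 1 := by
  ext
  simp [Umat_mulVec, NeZero.ne]

lemma mul_Umat (h1 : M *ᵥ 1 = 1) : M * Umat n = Umat n := by
  ext i j
  have := congrFun h1 i
  simp only [mulVec, dotProduct, Pi.one_apply, mul_one] at this
  simp [Umat, Matrix.mul_apply, ← Finset.sum_mul, this]

lemma Umat_mul (hM : M.IsSymm) (h1 : M *ᵥ 1 = 1) : Umat n * M = Umat n := by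
  rw [← Umat_isSymm.eq, ← hM.eq, ← transpose_mul, mul_Umat h1, Umat_isSymm.eq]

lemma pow_succ_eq_sub_Umat_pow_add [NeZero n] (hM : M.IsSymm) (h1 : M *ᵥ 1 = 1) (k : ℕ) :
    M ^ (k + 1) = (M - Umat n) ^ (k + 1) + Umat n := by
  simpa using add_pow_succ_of_mul_eq_zero (a := M - Umat n) isIdempotentElem_Umat
    (by rw [sub_mul, mul_Umat h1, isIdempotentElem_Umat.eq, sub_self])
    (by rw [mul_sub, Umat_mul hM h1, isIdempotentElem_Umat.eq, sub_self]) k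

theorem tendsto_pow_mulVec_sub_pow_mulVec [NeZero n] (hM : M.IsSymm) (h1 : M *ᵥ 1 = 1)
    (hpos : ∀ x, 0 ≤ x ⬝ᵥ (M - Umat n) *ᵥ x) (hlt : lamMax (M - Umat n) < 1)
    (x : Fin n → ℝ) (i j : Fin n) :
    Tendsto (fun k : ℕ => (M ^ k *ᵥ x) i - (M ^ k *ᵥ x) j) atTop (𝓝 0) := by
  have hN := tendsto_pi_nhds.1 (tendsto_pow_mulVec_zero (hM.sub Umat_isSymm) hpos hlt x)
  have hdiff : Tendsto (fun k : ℕ => ((M - Umat n) ^ k *ᵥ x) i - ((M - Umat n) ^ k *ᵥ x) j)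
      atTop (𝓝 0) := by
    simpa using (hN i).sub (hN j)
  rw [← tendsto_add_atTop_iff_nat 1]
  refine (hdiff.comp (tendsto_add_atTop_nat 1)).congr fun k => ?_
  simp [pow_succ_eq_sub_Umat_pow_add hM h1, add_mulVec, Umat_mulVec]

lemma sum_eq_zero_of_mulVec_eq_smul {N : Matrix (Fin n) (Fin n) ℝ} (hN : N.IsSymm)
    (h1 : N *ᵥ 1 = 0) {t : ℝ} (ht : t ≠ 0) {v : Fin n → ℝ} (hv : N *ᵥ v = t • v) :
    ∑ i, v i = 0 := by
  have : t * ∑ i, v i = 0 := by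
    calc t * ∑ i, v i = 1 ⬝ᵥ N *ᵥ v := by simp [hv, one_dotProduct, Finset.mul_sum]
      _ = 0 := by rw [dotProduct_mulVec_of_isSymm hN, h1, zero_dotProduct]
  exact (mul_eq_zero.1 this).resolve_left ht

lemma pow_mulVec_eq_pow_smul {A : Matrix (Fin n) (Fin n) ℝ} {t : ℝ} {v : Fin n → ℝ}
    (hv : A *ᵥ v = t • v) (k : ℕ) : A ^ k *ᵥ v = t ^ k • v := by
  induction k with
  | zero => simp
  | succ k ih => rw [pow_succ', ← mulVec_mulVec, ih, mulVec_smul, hv, smul_smul, ← pow_succ]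

theorem volume_setOf_bounded_disagreement [NeZero n] (hM : M.IsSymm) (h1 : M *ᵥ 1 = 1)
    (hgt : 1 < lamMax (M - Umat n)) :
    volume {x0 : Fin n → ℝ | ∃ C : ℝ, ∀ (k : ℕ) (i j : Fin n),
      |(M ^ k *ᵥ x0) i - (M ^ k *ᵥ x0) j| ≤ C} = 0 := by
  set l := lamMax (M - Umat n)
  obtain ⟨w, hw0, hwN⟩ := exists_mulVec_eq_lamMax_smul (hM.sub Umat_isSymm)
  have hwsum : ∑ i, w i = 0 := by
    refine sum_eq_zero_of_mulVec_eq_smul (hM.sub Umat_isSymm) ?_ (by positivity) hwN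
    rw [sub_mulVec, h1, Umat_mulVec_one, sub_self]
  have hwM : M *ᵥ w = l • w := by
    have hU : Umat n *ᵥ w = 0 := by
      ext
      simp [Umat_mulVec, hwsum]
    rwa [sub_mulVec, hU, sub_zero] at hwN
  have hpow (k : ℕ) (x : Fin n → ℝ) : w ⬝ᵥ M ^ k *ᵥ x = l ^ k * (w ⬝ᵥ x) := by
    rw [dotProduct_mulVec_of_isSymm (hM.pow k), pow_mulVec_eq_pow_smul hwM, smul_dotProduct,
      smul_eq_mul]
  have hsub : {x0 : Fin n → ℝ | ∃ C : ℝ, ∀ (k : ℕ) (i j : Fin n),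
      |(M ^ k *ᵥ x0) i - (M ^ k *ᵥ x0) j| ≤ C} ⊆ LinearMap.ker (dotProductEquiv ℝ (Fin n) w) := by
    rintro x ⟨C, hC⟩
    by_contra hx
    have hx : 0 < |w ⬝ᵥ x| := abs_pos.2 (by simpa using hx)
    obtain ⟨k, hk⟩ := pow_unbounded_of_one_lt ((∑ i, |w i|) * C / |w ⬝ᵥ x|) hgt
    have := abs_dotProduct_le_of_sum_eq_zero hwsum 0 (hC k · 0)
    rw [hpow, abs_mul, abs_of_pos (pow_pos (by positivity) k), ← le_div_iff₀ hx] at this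
    exact this.not_gt hk
  refine measure_mono_null hsub (Measure.addHaar_submodule _ _ fun htop => hw0 ?_)
  have : w ∈ LinearMap.ker (dotProductEquiv ℝ (Fin n) w) := htop ▸ Submodule.mem_top
  simpa using this

end Averaging

section Laplacian

variable {n : ℕ} {P : Matrix (Fin n) (Fin n) ℝ} {Es : Finset (Sym2 (Fin n))}

lemma esub_dotProduct (i j : Fin n) (x : Fin n → ℝ) : esub i j ⬝ᵥ x = x i - x j := by
  simp [esub, dotProduct, sub_mul, Finset.sum_sub_distrib, ite_mul]

lemma dmat_mk_mulVec (i j : Fin n) (x : Fin n → ℝ) :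
    dmat s(i, j) *ᵥ x = (x i - x j) • esub i j := by
  change vecMulVec (esub i j) (esub i j) *ᵥ x = _
  rw [vecMulVec_mulVec, esub_dotProduct, op_smul_eq_smul]

lemma dotProduct_dmat_mk_mulVec (i j : Fin n) (x : Fin n → ℝ) :
    x ⬝ᵥ dmat s(i, j) *ᵥ x = (x i - x j) ^ 2 := by
  rw [dmat_mk_mulVec, dotProduct_smul, dotProduct_comm, esub_dotProduct, smul_eq_mul, sq]

lemma dotProduct_dmat_mulVec_nonneg (e : Sym2 (Fin n)) (x : Fin n → ℝ) :
    0 ≤ x ⬝ᵥ dmat e *ᵥ x := by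
  induction e using Sym2.ind with
  | _ i j => rw [dotProduct_dmat_mk_mulVec]; positivity

lemma dotProduct_dmat_mulVec_le (e : Sym2 (Fin n)) (he : ¬ e.IsDiag) (x : Fin n → ℝ) :
    x ⬝ᵥ dmat e *ᵥ x ≤ ∑ k with k ∈ e, 2 * x k ^ 2 := by
  induction e using Sym2.ind with
  | _ i j =>
    have hij : i ≠ j := by simpa using he
    have hfilter : ({k | k ∈ s(i, j)} : Finset (Fin n)) = {i, j} := by
      ext
      simp
    rw [dotProduct_dmat_mk_mulVec, hfilter, Finset.sum_pair hij]
    nlinarith [sq_nonneg (x i + x j)]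

lemma dmat_isSymm (e : Sym2 (Fin n)) : (dmat e).IsSymm := by
  induction e using Sym2.ind with
  | _ i j => exact transpose_vecMulVec _ _

lemma edgeWeight_nonneg (h0 : ∀ i j, 0 ≤ P i j) (e : Sym2 (Fin n)) : 0 ≤ edgeWeight P e := by
  induction e using Sym2.ind with
  | _ i j => exact div_nonneg (add_nonneg (h0 i j) (h0 j i)) n.cast_nonneg

lemma lap_isSymm (P : Matrix (Fin n) (Fin n) ℝ) (Es : Finset (Sym2 (Fin n))) :
    (lap P Es).IsSymm := by
  simp only [IsSymm, lap, transpose_sum, transpose_smul, (dmat_isSymm _).eq]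

lemma lap_mulVec_one (P : Matrix (Fin n) (Fin n) ℝ) (Es : Finset (Sym2 (Fin n))) :
    lap P Es *ᵥ 1 = 0 := by
  refine (sum_mulVec _ _ _).trans (Finset.sum_eq_zero fun e _ => ?_)
  induction e using Sym2.ind with
  | _ i j => simp [smul_mulVec, dmat_mk_mulVec]

lemma dotProduct_lap_mulVec (x : Fin n → ℝ) :
    x ⬝ᵥ lap P Es *ᵥ x = ∑ e ∈ Es, edgeWeight P e * (x ⬝ᵥ dmat e *ᵥ x) := by
  simp [lap, sum_mulVec, dotProduct_sum, smul_mulVec, dotProduct_smul]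

lemma dotProduct_lap_mulVec_nonneg (h0 : ∀ i j, 0 ≤ P i j) (x : Fin n → ℝ) :
    0 ≤ x ⬝ᵥ lap P Es *ᵥ x := by
  rw [dotProduct_lap_mulVec]
  exact Finset.sum_nonneg fun e _ =>
    mul_nonneg (edgeWeight_nonneg h0 e) (dotProduct_dmat_mulVec_nonneg e x)

lemma eq_of_dotProduct_lap_mulVec_eq_zero (h0 : ∀ i j, 0 ≤ P i j)
    (hconn : (graphOf Es).Connected) (hw : ∀ e ∈ Es, 0 < edgeWeight P e) {x : Fin n → ℝ}
    (hx : x ⬝ᵥ lap P Es *ᵥ x = 0) (i j : Fin n) : x i = x j := by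
  rw [dotProduct_lap_mulVec, Finset.sum_eq_zero_iff_of_nonneg fun e _ =>
    mul_nonneg (edgeWeight_nonneg h0 e) (dotProduct_dmat_mulVec_nonneg e x)] at hx
  have hadj (a b : Fin n) (hab : (graphOf Es).Adj a b) : x a = x b := by
    have hab : s(a, b) ∈ Es := by simpa [graphOf] using hab.1
    have := (mul_eq_zero.1 (hx _ hab)).resolve_left (hw _ hab).ne'
    rw [dotProduct_dmat_mk_mulVec, sq_eq_zero_iff, sub_eq_zero] at this
    exact this
  obtain ⟨p⟩ := hconn.preconnected i j
  induction p with
  | nil => rfl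
  | cons h _ ih => exact (hadj _ _ h).trans ih

end Laplacian

section DegreeBound

variable {n : ℕ} {P : Matrix (Fin n) (Fin n) ℝ} {Es : Finset (Sym2 (Fin n))}

lemma sum_edgeWeight_incident_le (h0 : ∀ i j, 0 ≤ P i j) (hEs : ∀ e ∈ Es, ¬ e.IsDiag)
    (k : Fin n) :
    ∑ e ∈ Es with k ∈ e, edgeWeight P e ≤ ∑ j ∈ univ.erase k, (P k j + P j k) / n := by
  calc ∑ e ∈ Es with k ∈ e, edgeWeight P e
      ≤ ∑ e ∈ (univ.erase k).image (fun j => s(k, j)), edgeWeight P e := by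
        refine Finset.sum_le_sum_of_subset_of_nonneg (fun e he => ?_)
          fun e _ _ => edgeWeight_nonneg h0 e
        obtain ⟨he, hk⟩ := Finset.mem_filter.1 he
        obtain ⟨j, rfl⟩ := Sym2.mem_iff_exists.1 hk
        refine Finset.mem_image.2 ⟨j, Finset.mem_erase.2 ⟨fun hjk => hEs _ he ?_, mem_univ j⟩, rfl⟩
        simp [hjk]
    _ = ∑ j ∈ univ.erase k, (P k j + P j k) / n :=
        Finset.sum_image fun _ _ _ _ h => Sym2.congr_right.1 h

lemma sum_erase_add_div_le_half (hP : RowStochastic P)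
    (hassum : (∀ i, (1 : ℝ) / 2 ≤ P i i) ∨ ((∀ j, ∑ i, P i j = 1) ∧ 4 ≤ n)) (k : Fin n) :
    ∑ j ∈ univ.erase k, (P k j + P j k) / n ≤ 1 / 2 := by
  have hn : (0 : ℝ) < n := Nat.cast_pos.2 (Fin.pos k)
  have hrow : ∑ j ∈ univ.erase k, P k j = 1 - P k k := by
    rw [Finset.sum_erase_eq_sub (mem_univ k), hP.2 k]
  rw [← Finset.sum_div, Finset.sum_add_distrib, hrow, div_le_iff₀ hn]
  rcases hassum with hdiag | ⟨hcol, hn4⟩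
  · have hcol : ∑ j ∈ univ.erase k, P j k ≤ ∑ j ∈ univ.erase k, (1 : ℝ) / 2 := by
      refine Finset.sum_le_sum fun j hj => ?_
      have := Finset.add_le_sum (fun m _ => hP.1 j m) (mem_univ j) (mem_univ k)
        (Finset.ne_of_mem_erase hj)
      linarith [hP.2 j, hdiag j]
    rw [Finset.sum_const, Finset.card_erase_of_mem (mem_univ k), card_univ, Fintype.card_fin,
      nsmul_eq_mul, Nat.cast_pred (Fin.pos k)] at hcol
    linarith [hdiag k]
  · have hcol : ∑ j ∈ univ.erase k, P j k ≤ 1 :=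
      (Finset.sum_le_sum_of_subset_of_nonneg (Finset.erase_subset k univ)
        fun j _ _ => hP.1 j k).trans (hcol k).le
    have hn4 : (4 : ℝ) ≤ n := by exact_mod_cast hn4
    linarith [hP.1 k k]

lemma dotProduct_lap_mulVec_le (hP : RowStochastic P)
    (hassum : (∀ i, (1 : ℝ) / 2 ≤ P i i) ∨ ((∀ j, ∑ i, P i j = 1) ∧ 4 ≤ n))
    (hEs : ∀ e ∈ Es, ¬ e.IsDiag) (x : Fin n → ℝ) : x ⬝ᵥ lap P Es *ᵥ x ≤ x ⬝ᵥ x := by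
  calc x ⬝ᵥ lap P Es *ᵥ x
      ≤ ∑ e ∈ Es, ∑ k with k ∈ e, edgeWeight P e * (2 * x k ^ 2) := by
        rw [dotProduct_lap_mulVec]
        refine Finset.sum_le_sum fun e he => ?_
        rw [← Finset.mul_sum]
        exact mul_le_mul_of_nonneg_left (dotProduct_dmat_mulVec_le e (hEs e he) x)
          (edgeWeight_nonneg hP.1 e)
    _ = ∑ k, (∑ e ∈ Es with k ∈ e, edgeWeight P e) * (2 * x k ^ 2) := by
        simp_rw [Finset.sum_filter, Finset.sum_mul, ite_mul, zero_mul]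
        exact Finset.sum_comm
    _ ≤ ∑ k, 1 / 2 * (2 * x k ^ 2) := by
        gcongr with k
        exact (sum_edgeWeight_incident_le hP.1 hEs k).trans (sum_erase_add_div_le_half hP hassum k)
    _ = x ⬝ᵥ x := by simp [dotProduct, sq]

/-- Shifting `x` by its mean does not change the Laplacian form, so `L ≤ I` improves to
`L ≤ I - U`. -/
lemma dotProduct_lap_mulVec_add_sq_sum_div_le [NeZero n] (hP : RowStochastic P)
    (hassum : (∀ i, (1 : ℝ) / 2 ≤ P i i) ∨ ((∀ j, ∑ i, P i j = 1) ∧ 4 ≤ n))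
    (hEs : ∀ e ∈ Es, ¬ e.IsDiag) (x : Fin n → ℝ) :
    x ⬝ᵥ lap P Es *ᵥ x + (∑ i, x i) ^ 2 / n ≤ x ⬝ᵥ x := by
  set y := x + (-(∑ i, x i) / n) • 1
  have hy : y ⬝ᵥ y = x ⬝ᵥ x - (∑ i, x i) ^ 2 / n := by
    have hn : (n : ℝ) ≠ 0 := NeZero.ne _
    simp only [y, dotProduct, Pi.add_apply, Pi.smul_apply, Pi.one_apply, smul_eq_mul, mul_one]
    simp only [add_mul, mul_add, Finset.sum_add_distrib, ← Finset.sum_mul, ← Finset.mul_sum,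
      Finset.sum_const, card_univ, Fintype.card_fin, nsmul_eq_mul]
    field_simp
    ring
  have := dotProduct_lap_mulVec_le hP hassum hEs y
  rw [dotProduct_mulVec_add_smul_one (lap_isSymm P Es) (lap_mulVec_one P Es), hy] at this
  linarith

end DegreeBound

/-- The matrix `M_β` of the paper, so that `E[x(k)] = M_βᵏ x⁰`. -/
def meanMatrix {n : ℕ} (P : Matrix (Fin n) (Fin n) ℝ) (Epst Eneg : Finset (Sym2 (Fin n)))
    (α β : ℝ) : Matrix (Fin n) (Fin n) ℝ :=
  1 - α • lap P Epst + β • lap P Eneg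

section MeanMatrix

variable {n : ℕ} {P : Matrix (Fin n) (Fin n) ℝ} {Epst Eneg : Finset (Sym2 (Fin n))} {α β : ℝ}

lemma meanMatrix_isSymm : (meanMatrix P Epst Eneg α β).IsSymm :=
  (isSymm_one.sub ((lap_isSymm P Epst).smul α)).add ((lap_isSymm P Eneg).smul β)

lemma meanMatrix_mulVec_one : meanMatrix P Epst Eneg α β *ᵥ 1 = 1 := by
  simp [meanMatrix, add_mulVec, sub_mulVec, smul_mulVec, lap_mulVec_one]

lemma dotProduct_Umat_mulVec (x : Fin n → ℝ) : x ⬝ᵥ Umat n *ᵥ x = (∑ i, x i) ^ 2 / n := by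
  rw [Umat_mulVec]
  simp only [dotProduct]
  rw [← Finset.sum_mul]
  ring

lemma dotProduct_meanMatrix_sub_Umat_mulVec (x : Fin n → ℝ) :
    x ⬝ᵥ (meanMatrix P Epst Eneg α β - Umat n) *ᵥ x =
      x ⬝ᵥ x - α * (x ⬝ᵥ lap P Epst *ᵥ x) + β * (x ⬝ᵥ lap P Eneg *ᵥ x) - (∑ i, x i) ^ 2 / n := by
  simp only [meanMatrix, sub_mulVec, add_mulVec, one_mulVec, smul_mulVec, dotProduct_sub,
    dotProduct_add, dotProduct_smul, smul_eq_mul, dotProduct_Umat_mulVec]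

lemma convexOn_lamMax_meanMatrix_sub_Umat [NeZero n] :
    ConvexOn ℝ univ fun β => lamMax (meanMatrix P Epst Eneg α β - Umat n) := by
  simpa only [meanMatrix, add_sub_right_comm] using
    convexOn_lamMax_add_smul ((isSymm_one.sub ((lap_isSymm P Epst).smul α)).sub Umat_isSymm)
      (lap_isSymm P Eneg)

lemma lamMax_meanMatrix_zero_sub_Umat_lt_one [NeZero n] (h0 : ∀ i j, 0 ≤ P i j) (hα : 0 < α)
    (hconn : (graphOf Epst).Connected) (hw : ∀ e ∈ Epst, 0 < edgeWeight P e) :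
    lamMax (meanMatrix P Epst Eneg α 0 - Umat n) < 1 := by
  refine lamMax_lt_of_forall_dotProduct_mulVec_lt (meanMatrix_isSymm.sub Umat_isSymm) fun x hx => ?_
  rw [dotProduct_meanMatrix_sub_Umat_mulVec, zero_mul, add_zero, one_mul]
  have hq := dotProduct_lap_mulVec_nonneg (Es := Epst) h0 x
  suffices 0 < α * (x ⬝ᵥ lap P Epst *ᵥ x) + (∑ i, x i) ^ 2 / n by linarith
  rcases hq.lt_or_eq with hq | hq
  · positivity
  have hconst := eq_of_dotProduct_lap_mulVec_eq_zero h0 hconn hw hq.symm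
  have hx0 : x 0 ≠ 0 := fun h => hx (funext fun i => (hconst i 0).trans h)
  have hsum : ∑ i, x i = n * x 0 := by simp [hconst _ 0]
  rw [← hq, mul_zero, zero_add, hsum]
  have : (n : ℝ) ≠ 0 := NeZero.ne _
  positivity

lemma exists_one_lt_lamMax_meanMatrix_sub_Umat [NeZero n] (h0 : ∀ i j, 0 ≤ P i j)
    {e : Sym2 (Fin n)} (he : e ∈ Eneg) (hdiag : ¬ e.IsDiag) (hwe : 0 < edgeWeight P e) :
    ∃ B, 0 ≤ B ∧ 1 < lamMax (meanMatrix P Epst Eneg α B - Umat n) := by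
  induction e using Sym2.ind with
  | _ i j =>
    have hij : i ≠ j := by simpa using hdiag
    set u := esub i j
    have hui : u i = 1 := by simp [u, esub, hij]
    have huj : u j = -1 := by simp [u, esub, hij.symm]
    have huu : u ⬝ᵥ u = 2 := by rw [esub_dotProduct, hui, huj]; norm_num
    have hsum : ∑ k, u k = 0 := by simp [← dotProduct_one, u, esub_dotProduct]
    set q := u ⬝ᵥ lap P Eneg *ᵥ u
    have hq : 0 < q := by
      refine lt_of_lt_of_le ?_ (Finset.single_le_sum (f := fun e => edgeWeight P e *
        (u ⬝ᵥ dmat e *ᵥ u)) (fun e _ => mul_nonneg (edgeWeight_nonneg h0 e)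
          (dotProduct_dmat_mulVec_nonneg e u)) he |>.trans_eq (dotProduct_lap_mulVec u).symm)
      rw [dotProduct_dmat_mk_mulVec, hui, huj]
      positivity
    refine ⟨(|α * (u ⬝ᵥ lap P Epst *ᵥ u)| + 1) / q, by positivity,
      lt_lamMax_of_lt_dotProduct_mulVec (meanMatrix_isSymm.sub Umat_isSymm) (x := u) ?_⟩
    rw [dotProduct_meanMatrix_sub_Umat_mulVec, hsum, div_mul_cancel₀ _ hq.ne', huu, sq, zero_mul,
      zero_div, sub_zero]
    linarith [le_abs_self (α * (u ⬝ᵥ lap P Epst *ᵥ u))]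

lemma dotProduct_meanMatrix_sub_Umat_mulVec_nonneg [NeZero n] (hP : RowStochastic P)
    (hassum : (∀ i, (1 : ℝ) / 2 ≤ P i i) ∨ ((∀ j, ∑ i, P i j = 1) ∧ 4 ≤ n))
    (hEs : ∀ e ∈ Epst, ¬ e.IsDiag) (hα : α ≤ 1) (hβ : 0 ≤ β) (x : Fin n → ℝ) :
    0 ≤ x ⬝ᵥ (meanMatrix P Epst Eneg α β - Umat n) *ᵥ x := by
  rw [dotProduct_meanMatrix_sub_Umat_mulVec]
  have hpos := dotProduct_lap_mulVec_nonneg (Es := Epst) hP.1 x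
  have hneg := dotProduct_lap_mulVec_nonneg (Es := Eneg) hP.1 x
  have := dotProduct_lap_mulVec_add_sq_sum_div_le hP hassum hEs x
  nlinarith

end MeanMatrix

theorem phase_transition_in_mean_general
    (n : ℕ) (hn : 3 ≤ n)
    (Epst Eneg : Finset (Sym2 (Fin n)))
    (hloop : ∀ e ∈ Epst ∪ Eneg, ¬ e.IsDiag)
    (P : Matrix (Fin n) (Fin n) ℝ)
    (hP : RowStochastic P)
    (hneg : Eneg.Nonempty)
    (hpconn : (graphOf Epst).Connected)
    (hw : ∀ e ∈ Epst ∪ Eneg, 0 < edgeWeight P e)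
    (α : ℝ) (hα0 : 0 < α) (hα1 : α ≤ 1)
    (hassum : (∀ i, (1 : ℝ) / 2 ≤ P i i) ∨ ((∀ j, ∑ i, P i j = 1) ∧ 4 ≤ n)) :
    ∃ βstar : ℝ, 0 < βstar ∧
      (∀ β : ℝ, 0 ≤ β → β < βstar →
        lamMax (1 - α • lap P Epst + β • lap P Eneg - Umat n) < 1 ∧
        ∀ (x0 : Fin n → ℝ) (i j : Fin n),
          Tendsto (fun k : ℕ =>
              ((1 - α • lap P Epst + β • lap P Eneg) ^ k *ᵥ x0) i -
              ((1 - α • lap P Epst + β • lap P Eneg) ^ k *ᵥ x0) j) atTop (nhds 0)) ∧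
      (∀ β : ℝ, βstar < β →
        1 < lamMax (1 - α • lap P Epst + β • lap P Eneg - Umat n) ∧
        volume {x0 : Fin n → ℝ | ∃ C : ℝ, ∀ (k : ℕ) (i j : Fin n),
          |((1 - α • lap P Epst + β • lap P Eneg) ^ k *ᵥ x0) i -
           ((1 - α • lap P Epst + β • lap P Eneg) ^ k *ᵥ x0) j| ≤ C} = 0) := by
  have : NeZero n := ⟨by omega⟩
  obtain ⟨e, he⟩ := hneg
  have hconv : ConvexOn ℝ (Ici 0) fun β => lamMax (meanMatrix P Epst Eneg α β - Umat n) :=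
    convexOn_lamMax_meanMatrix_sub_Umat.subset (subset_univ _) (convex_Ici 0)
  have h0 := lamMax_meanMatrix_zero_sub_Umat_lt_one (Eneg := Eneg) hP.1 hα0 hpconn
    fun e he => hw e (mem_union_left _ he)
  obtain ⟨B, hB0, hB⟩ := exists_one_lt_lamMax_meanMatrix_sub_Umat (Epst := Epst) (α := α) hP.1 he
    (hloop e (mem_union_right _ he)) (hw e (mem_union_right _ he))
  obtain ⟨βs, hβs, hsub, hsup⟩ := hconv.exists_threshold h0 hB0 hB
  refine ⟨βs, hβs, fun β hβ0 hβ => ⟨hsub β hβ0 hβ, ?_⟩, fun β hβ =>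
    ⟨hsup β hβ, volume_setOf_bounded_disagreement meanMatrix_isSymm meanMatrix_mulVec_one
      (hsup β hβ)⟩⟩
  exact tendsto_pow_mulVec_sub_pow_mulVec meanMatrix_isSymm meanMatrix_mulVec_one
    (dotProduct_meanMatrix_sub_Umat_mulVec_nonneg hP hassum
      (fun e he => hloop e (mem_union_left _ he)) hα1 hβ0) (hsub β hβ0 hβ)

theorem phase_transition_in_mean
    (n : ℕ) (hn : 3 ≤ n)
    (Epst Eneg : Finset (Sym2 (Fin n)))
    (hdisj : Disjoint Epst Eneg)
    (hloop : ∀ e ∈ Epst ∪ Eneg, ¬ e.IsDiag)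
    (P : Matrix (Fin n) (Fin n) ℝ)
    (hP : RowStochastic P)
    (hPc : Complies P (Epst ∪ Eneg))
    (hconn : (graphOf (Epst ∪ Eneg)).Connected)
    (hneg : Eneg.Nonempty)
    (hpconn : (graphOf Epst).Connected)
    (hw : ∀ e ∈ Epst ∪ Eneg, 0 < edgeWeight P e)
    (α : ℝ) (hα0 : 0 < α) (hα1 : α ≤ 1)
    (hassum : (∀ i, (1 : ℝ) / 2 ≤ P i i) ∨ ((∀ j, ∑ i, P i j = 1) ∧ 4 ≤ n)) :
    ∃ βstar : ℝ, 0 < βstar ∧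
      (∀ β : ℝ, 0 ≤ β → β < βstar →
        lamMax (1 - α • lap P Epst + β • lap P Eneg - Umat n) < 1 ∧
        ∀ (x0 : Fin n → ℝ) (i j : Fin n),
          Tendsto (fun k : ℕ =>
              ((1 - α • lap P Epst + β • lap P Eneg) ^ k *ᵥ x0) i -
              ((1 - α • lap P Epst + β • lap P Eneg) ^ k *ᵥ x0) j) atTop (nhds 0)) ∧
      (∀ β : ℝ, βstar < β →
        1 < lamMax (1 - α • lap P Epst + β • lap P Eneg - Umat n) ∧
        volume {x0 : Fin n → ℝ | ∃ C : ℝ, ∀ (k : ℕ) (i j : Fin n),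
          |((1 - α • lap P Epst + β • lap P Eneg) ^ k *ᵥ x0) i -
           ((1 - α • lap P Epst + β • lap P Eneg) ^ k *ᵥ x0) j| ≤ C} = 0) :=
  phase_transition_in_mean_general n hn Epst Eneg hloop P hP hneg hpconn hw α hα0 hα1 hassum

end SignedOpinion
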